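/- arXiv:2407.05945 — 2 statements merged into one kernel-verified Lean document; each statement's English description precedes it below -/
import Mathlib

section
/- Let J be the block-diagonal Jordan-like matrix with blocks J_{s_j} of size s_j+1 (diagonal entries z_j, superdiagonals α^{(j)}_{s_j},...,α^{(j)}_1), and v the vector that has w_j in the last position of the j-th block and zeros elsewhere. If vectors q_0,...,q_n satisfy q_k = p_k(J) v with p_k ∈ P_k and are orthonormal in C^m, then the polynomials p_k are orthonormal with respect to the Sobolev inner product ⟨p,q⟩_S = Σ_{j=1}^σ Σ_{i=0}^{s_j} |w_j|^2 |(∏_{r=1}^i α^{(j)}_r)/i!|^2 p^{(i)}(z_j) conjugate(q^{(i)}(z_j)). -/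
open Matrix Polynomial Finset

private lemma itder_add (p q : Polynomial ℂ) :
    ∀ t : ℕ, Polynomial.derivative^[t] (p + q) =
      Polynomial.derivative^[t] p + Polynomial.derivative^[t] q := by
  intro t
  induction t with
  | zero => simp
  | succ t ih => simp [Function.iterate_succ_apply', ih]

private lemma itder_X_mul (p : Polynomial ℂ) :
    ∀ t : ℕ, Polynomial.derivative^[t + 1] (X * p) =
      X * Polynomial.derivative^[t + 1] p +
        ((t : Polynomial ℂ) + 1) * Polynomial.derivative^[t] p := by
  intro t
  induction t with
  | zero => simp [Polynomial.derivative_mul]; ring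
  | succ t ih =>
      rw [Function.iterate_succ_apply', ih]
      simp only [Polynomial.derivative_add, Polynomial.derivative_mul,
        Polynomial.derivative_natCast, Polynomial.derivative_one, Polynomial.derivative_X,
        ← Function.iterate_succ_apply']
      push_cast
      ring

private lemma abs_sq_mul (a b x y : ℂ) :
    ((‖a‖ : ℝ) : ℂ) ^ 2 * ((‖b‖ : ℝ) : ℂ) ^ 2 * (x * (starRingEnd ℂ) y) =
      (a * b * x) * (starRingEnd ℂ) (a * b * y) := by
  have ha : ((‖a‖ : ℝ) : ℂ) ^ 2 = a * (starRingEnd ℂ) a := by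
    rw [Complex.mul_conj, ← Complex.sq_norm, Complex.ofReal_pow]
  have hb : ((‖b‖ : ℝ) : ℂ) ^ 2 = b * (starRingEnd ℂ) b := by
    rw [Complex.mul_conj, ← Complex.sq_norm, Complex.ofReal_pow]
  rw [ha, hb, _root_.map_mul, _root_.map_mul]
  ring

private lemma key_formula (σ : ℕ) (s : Fin σ → ℕ) (z w : Fin σ → ℂ) (α : Fin σ → ℕ → ℂ)
    (J : Matrix (Σ j : Fin σ, Fin (s j + 1)) (Σ j : Fin σ, Fin (s j + 1)) ℂ)
    (hJ : J = Matrix.blockDiagonal' fun j =>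
      Matrix.of fun (i i' : Fin (s j + 1)) =>
        if (i : ℕ) = (i' : ℕ) then z j
        else if (i : ℕ) + 1 = (i' : ℕ) then α j (s j - (i : ℕ)) else 0)
    (v : (Σ j : Fin σ, Fin (s j + 1)) → ℂ)
    (hv : v = fun x => if (x.2 : ℕ) = s x.1 then w x.1 else 0)
    (p : Polynomial ℂ) :
    ∀ (j : Fin σ) (i : Fin (s j + 1)),
      ((Polynomial.aeval J p) *ᵥ v) ⟨j, i⟩ =
        w j * ((∏ r ∈ Finset.Icc 1 (s j - (i : ℕ)), α j r) /
            ((s j - (i : ℕ)).factorial : ℂ)) *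
          (Polynomial.derivative^[s j - (i : ℕ)] p).eval (z j) := by
  -- first, how J acts on a vector
  have hmul : ∀ (u : (Σ j : Fin σ, Fin (s j + 1)) → ℂ) (j : Fin σ) (i : Fin (s j + 1)),
      (J *ᵥ u) ⟨j, i⟩ = z j * u ⟨j, i⟩ +
        (if h : (i : ℕ) < s j then
          α j (s j - (i : ℕ)) * u ⟨j, ⟨(i : ℕ) + 1, by omega⟩⟩ else 0) := by
    intro u j i
    have hsum : (J *ᵥ u) ⟨j, i⟩ = ∑ j', ∑ i' : Fin (s j' + 1), J ⟨j, i⟩ ⟨j', i'⟩ * u ⟨j', i'⟩ := by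
      simp only [Matrix.mulVec, dotProduct]
      rw [← Finset.univ_sigma_univ, Finset.sum_sigma]
    rw [hsum, Finset.sum_eq_single j]
    · have hblock : ∀ i' : Fin (s j + 1),
          J ⟨j, i⟩ ⟨j, i'⟩ = if (i : ℕ) = (i' : ℕ) then z j
            else if (i : ℕ) + 1 = (i' : ℕ) then α j (s j - (i : ℕ)) else 0 := by
        intro i'
        rw [hJ, Matrix.blockDiagonal'_apply_eq]
        rfl
      by_cases hi : (i : ℕ) < s j
      · rw [dif_pos hi]
        set i1 : Fin (s j + 1) := ⟨(i : ℕ) + 1, by omega⟩ with hi1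
        have hterm : ∀ i' : Fin (s j + 1),
            J ⟨j, i⟩ ⟨j, i'⟩ * u ⟨j, i'⟩ =
              (if i = i' then z j * u ⟨j, i'⟩ else 0) +
              (if i1 = i' then α j (s j - (i : ℕ)) * u ⟨j, i'⟩ else 0) := by
          intro i'
          rw [hblock i']
          by_cases h1 : i = i'
          · subst h1
            have : ¬ (i1 = i) := by
              simp only [hi1, Fin.ext_iff]; omega
            simp [this]
          · have hv1 : ¬ ((i : ℕ) = (i' : ℕ)) := by
              simpa [Fin.ext_iff] using h1
            by_cases h2 : i1 = i'
            · subst h2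
              simp [hv1, hi1, h1]
              intro h; exact absurd h h1
            · have hv2 : ¬ ((i : ℕ) + 1 = (i' : ℕ)) := by
                simpa [hi1, Fin.ext_iff] using h2
              simp [hv1, hv2, h1, h2]
        rw [Finset.sum_congr rfl fun i' _ => hterm i', Finset.sum_add_distrib,
          Finset.sum_ite_eq, Finset.sum_ite_eq]
        simp
      · rw [dif_neg hi]
        have hie : (i : ℕ) = s j := by omega
        have hterm : ∀ i' : Fin (s j + 1),
            J ⟨j, i⟩ ⟨j, i'⟩ * u ⟨j, i'⟩ = (if i = i' then z j * u ⟨j, i'⟩ else 0) := by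
          intro i'
          rw [hblock i']
          by_cases h1 : i = i'
          · subst h1; simp
          · have hv1 : ¬ ((i : ℕ) = (i' : ℕ)) := by
              simpa [Fin.ext_iff] using h1
            have hv2 : ¬ ((i : ℕ) + 1 = (i' : ℕ)) := by
              have := i'.isLt; omega
            simp [hv1, hv2, h1]
        rw [Finset.sum_congr rfl fun i' _ => hterm i', Finset.sum_ite_eq]
        simp
    · intro j' _ hj'
      apply Finset.sum_eq_zero
      intro i' _
      rw [hJ, Matrix.blockDiagonal'_apply_ne _ _ _ (Ne.symm hj'), zero_mul]
    · intro h
      exact absurd (Finset.mem_univ j) h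
  induction p using Polynomial.induction_on with
  | C a =>
      intro j i
      rw [Polynomial.aeval_C, Algebra.algebraMap_eq_smul_one, Matrix.smul_mulVec,
        Matrix.one_mulVec]
      by_cases hie : (i : ℕ) = s j
      · have h0 : s j - (i : ℕ) = 0 := by omega
        rw [hv]
        simp [hie, h0]
        ring
      · have h0 : 0 < s j - (i : ℕ) := by have := i.isLt; omega
        rw [hv]
        simp [hie, Polynomial.iterate_derivative_C h0]
  | add p q hp hq =>
      intro j i
      rw [map_add, Matrix.add_mulVec]
      simp only [Pi.add_apply]
      rw [hp j i, hq j i, itder_add, Polynomial.eval_add]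
      ring
  | monomial m a ih =>
      intro j i
      have hXp : (C a) * X ^ (m + 1) = X * ((C a) * X ^ m) := by ring
      rw [hXp, _root_.map_mul, Polynomial.aeval_X, ← Matrix.mulVec_mulVec, hmul]
      by_cases hi : (i : ℕ) < s j
      · rw [dif_pos hi, ih j i, ih j ⟨(i : ℕ) + 1, by omega⟩]
        obtain ⟨t, ht⟩ : ∃ t, s j - (i : ℕ) = t + 1 := ⟨s j - (i : ℕ) - 1, by omega⟩
        have ht1 : s j - ((⟨(i : ℕ) + 1, by omega⟩ : Fin (s j + 1)) : ℕ) = t := by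
          simp only []
          omega
        rw [ht1, ht, itder_X_mul, Polynomial.eval_add, Polynomial.eval_mul,
          Polynomial.eval_mul, Polynomial.eval_X, Polynomial.eval_add,
          Polynomial.eval_natCast, Polynomial.eval_one,
          Finset.prod_Icc_succ_top (by omega : 1 ≤ t + 1), Nat.factorial_succ]
        generalize Polynomial.eval (z j)
          (Polynomial.derivative^[t + 1] (Polynomial.C a * Polynomial.X ^ m)) = e1
        generalize Polynomial.eval (z j)
          (Polynomial.derivative^[t] (Polynomial.C a * Polynomial.X ^ m)) = e0
        have hfac : ((t.factorial : ℂ)) ≠ 0 := by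
          exact_mod_cast Nat.factorial_ne_zero t
        have hfac1 : (((t + 1) * t.factorial : ℕ) : ℂ) ≠ 0 := by
          exact_mod_cast Nat.mul_ne_zero (Nat.succ_ne_zero t) (Nat.factorial_ne_zero t)
        push_cast
        have h2 : ((t : ℂ) + 1) ≠ 0 := by
          have h3 : ((t + 1 : ℕ) : ℂ) ≠ 0 := Nat.cast_ne_zero.mpr (Nat.succ_ne_zero t)
          push_cast at h3
          exact h3
        field_simp
      · rw [dif_neg hi, ih j i]
        have hie : s j - (i : ℕ) = 0 := by have := i.isLt; omega
        rw [hie]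
        simp
        ring

/-- Krylov induced Sobolev orthogonal polynomials: for the block-diagonal
Jordan-like matrix `J` with blocks `J_{s_j}` and starting vector `v` having
`w_j` in the last slot of each block, if the vectors `q_k = p_k(J) v` are
orthonormal in `ℂ^m`, then the polynomials `p_k` are orthonormal for the
Sobolev inner product
`⟨p,q⟩_S = ∑_j ∑_{i=0}^{s_j} |w_j|² |(∏_{r=1}^i α^{(j)}_r)/i!|² p^{(i)}(z_j) conj(q^{(i)}(z_j))`. -/
theorem krylov_induced_sobolev_orthogonal_polynomials
    (σ n : ℕ) (s : Fin σ → ℕ) (z w : Fin σ → ℂ) (α : Fin σ → ℕ → ℂ)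
    (hα : ∀ j r, α j r ≠ 0)
    (J : Matrix (Σ j : Fin σ, Fin (s j + 1)) (Σ j : Fin σ, Fin (s j + 1)) ℂ)
    (hJ : J = Matrix.blockDiagonal' fun j =>
      Matrix.of fun (i i' : Fin (s j + 1)) =>
        if (i : ℕ) = (i' : ℕ) then z j
        else if (i : ℕ) + 1 = (i' : ℕ) then α j (s j - (i : ℕ)) else 0)
    (v : (Σ j : Fin σ, Fin (s j + 1)) → ℂ)
    (hv : v = fun x => if (x.2 : ℕ) = s x.1 then w x.1 else 0)
    (p : Fin (n + 1) → Polynomial ℂ) (hdeg : ∀ k, (p k).degree ≤ (k : ℕ))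
    (q : Fin (n + 1) → (Σ j : Fin σ, Fin (s j + 1)) → ℂ)
    (hq : ∀ k, q k = (Polynomial.aeval J (p k)) *ᵥ v)
    (horth : ∀ k h : Fin (n + 1),
      (∑ x, q k x * (starRingEnd ℂ) (q h x)) = if k = h then 1 else 0) :
    ∀ k h : Fin (n + 1),
      (∑ j, ∑ i ∈ Finset.range (s j + 1),
          ((‖w j‖ : ℝ) : ℂ) ^ 2 *
            ((‖(∏ r ∈ Finset.Icc 1 i, α j r) / (i.factorial : ℂ)‖ : ℝ) : ℂ) ^ 2 *
            ((Polynomial.derivative^[i] (p k)).eval (z j) *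
              (starRingEnd ℂ) ((Polynomial.derivative^[i] (p h)).eval (z j)))) =
        if k = h then 1 else 0 := by
  intro k h
  rw [← horth k h]
  have hsum : (∑ x, q k x * (starRingEnd ℂ) (q h x)) =
      ∑ j, ∑ i : Fin (s j + 1), q k ⟨j, i⟩ * (starRingEnd ℂ) (q h ⟨j, i⟩) := by
    rw [← Finset.univ_sigma_univ, Finset.sum_sigma]
  rw [hsum]
  apply Finset.sum_congr rfl
  intro j _
  set g : ℕ → ℂ := fun t =>
    (w j * ((∏ r ∈ Finset.Icc 1 t, α j r) / (t.factorial : ℂ)) *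
        (Polynomial.derivative^[t] (p k)).eval (z j)) *
      (starRingEnd ℂ)
        (w j * ((∏ r ∈ Finset.Icc 1 t, α j r) / (t.factorial : ℂ)) *
          (Polynomial.derivative^[t] (p h)).eval (z j)) with hg
  have hinner : (∑ i : Fin (s j + 1), q k ⟨j, i⟩ * (starRingEnd ℂ) (q h ⟨j, i⟩)) =
      ∑ i : Fin (s j + 1), g (s j - (i : ℕ)) := by
    apply Finset.sum_congr rfl
    intro i _
    rw [hq k, hq h, key_formula σ s z w α J hJ v hv (p k) j i,
      key_formula σ s z w α J hJ v hv (p h) j i]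
  rw [hinner, Fin.sum_univ_eq_sum_range (fun i => g (s j - i)) (s j + 1)]
  have hrefl : (∑ i ∈ Finset.range (s j + 1), g (s j - i)) =
      ∑ i ∈ Finset.range (s j + 1), g i := by
    refine Eq.trans ?_ (Finset.sum_range_reflect g (s j + 1))
    apply Finset.sum_congr rfl
    intro i _
    rfl
  rw [hrefl]
  apply Finset.sum_congr rfl
  intro i _
  exact abs_sq_mul (w j) ((∏ r ∈ Finset.Icc 1 i, α j r) / (i.factorial : ℂ)) _ _
end

section
/- If z_1,...,z_m are distinct, ξ_1,...,ξ_n are distinct and disjoint from the z_j, and n+1 ≤ m, then the m×(n+1) matrix C with first column of ones and remaining entries 1/(z_j − ξ_k) has full column rank n+1. -/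
open Matrix Polynomial Finset

private lemma cauchy_cols_li (m n : ℕ) (z : Fin m → ℂ) (ξ : Fin n → ℂ)
    (hz : Function.Injective z) (hξ : Function.Injective ξ)
    (hzξ : ∀ j k, z j ≠ ξ k) (hnm : n + 1 ≤ m) :
    LinearIndependent ℂ (fun (k : Fin (n + 1)) (j : Fin m) =>
      (Fin.cases (1 : ℂ) (fun i => (z j - ξ i)⁻¹) k : ℂ)) := by
  rw [Fintype.linearIndependent_iff]
  intro c hc k
  -- define the polynomial
  set P : ℂ[X] := C (c 0) * ∏ i, (X - C (ξ i)) +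
      ∑ i : Fin n, C (c i.succ) * ∏ l ∈ univ.erase i, (X - C (ξ l)) with hP
  have hsub : ∀ j i, z j - ξ i ≠ 0 := fun j i => sub_ne_zero.2 (hzξ j i)
  have heval : ∀ j, P.eval (z j) = 0 := by
    intro j
    have h0 := congrFun hc j
    simp only [Pi.smul_apply, smul_eq_mul, Pi.zero_apply, Finset.sum_apply] at h0
    rw [Fin.sum_univ_succ] at h0
    simp only [Fin.cases_zero, Fin.cases_succ, mul_one] at h0
    have := congrArg (· * ∏ i, (z j - ξ i)) h0
    simp only [zero_mul, add_mul, Finset.sum_mul] at this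
    rw [hP]
    simp only [eval_add, eval_mul, eval_C, eval_prod, eval_sub, eval_X, eval_finset_sum]
    rw [← this]
    congr 1
    refine Finset.sum_congr rfl fun i _ => ?_
    rw [← Finset.mul_prod_erase univ (fun l => z j - ξ l) (Finset.mem_univ i),
      mul_assoc, inv_mul_cancel_left₀ (hsub j i)]
  have hdegfull : (∏ i, (X - C (ξ i)) : ℂ[X]).natDegree = n := by
    rw [natDegree_prod _ _ (fun i _ => X_sub_C_ne_zero (ξ i))]
    simp
  have hdegerase : ∀ i : Fin n,
      (∏ l ∈ univ.erase i, (X - C (ξ l)) : ℂ[X]).natDegree = n - 1 := by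
    intro i
    rw [natDegree_prod _ _ (fun l _ => X_sub_C_ne_zero (ξ l))]
    simp [Finset.card_erase_of_mem]
  have hPdeg : P.natDegree ≤ n := by
    apply le_trans (natDegree_add_le _ _)
    apply max_le
    · exact le_trans (natDegree_mul_le) (by simp [hdegfull])
    · apply le_trans (natDegree_sum_le _ _)
      apply Finset.sup_le
      intro i _
      exact le_trans (natDegree_mul_le) (by simp [hdegerase i])
  have hP0 : P = 0 := by
    apply P.eq_zero_of_natDegree_lt_card_of_eval_eq_zero hz heval
    simpa using lt_of_le_of_lt hPdeg (by omega)
  -- first, c 0 = 0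
  have hc0 : c 0 = 0 := by
    have := congrArg (fun q : ℂ[X] => q.coeff n) hP0
    simp only [hP, coeff_add, coeff_zero, coeff_C_mul, finset_sum_coeff] at this
    have h1 : (∏ i, (X - C (ξ i)) : ℂ[X]).coeff n = 1 := by
      have hm : (∏ i, (X - C (ξ i)) : ℂ[X]).Monic :=
        monic_prod_of_monic _ _ (fun i _ => monic_X_sub_C (ξ i))
      have := hm.coeff_natDegree
      rwa [hdegfull] at this
    have h2 : ∀ i : Fin n,
        (∏ l ∈ univ.erase i, (X - C (ξ l)) : ℂ[X]).coeff n = 0 := by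
      intro i
      apply coeff_eq_zero_of_natDegree_lt
      rw [hdegerase i]
      have : 0 < n := i.pos
      omega
    rw [h1] at this
    simp only [h2, mul_zero, Finset.sum_const_zero, add_zero, mul_one] at this
    exact this
  -- now c i.succ = 0
  have hcs : ∀ i : Fin n, c i.succ = 0 := by
    intro i
    have hev := congrArg (fun q : ℂ[X] => q.eval (ξ i)) hP0
    simp only [hP, eval_add, eval_mul, eval_C, eval_prod, eval_sub, eval_X,
      eval_finset_sum, eval_zero] at hev
    rw [Finset.prod_eq_zero (Finset.mem_univ i) (by simp)] at hev
    have hoff : ∀ i' ∈ (univ.erase i : Finset (Fin n)),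
        c i'.succ * ∏ l ∈ univ.erase i', (ξ i - ξ l) = 0 := by
      intro i' hi'
      rw [Finset.prod_eq_zero (Finset.mem_erase.2 ⟨(Finset.mem_erase.1 hi').1.symm,
        Finset.mem_univ i⟩) (by simp), mul_zero]
    rw [← Finset.add_sum_erase _ _ (Finset.mem_univ i),
      Finset.sum_eq_zero hoff] at hev
    have hprod : (∏ l ∈ univ.erase i, (ξ i - ξ l)) ≠ 0 := by
      apply Finset.prod_ne_zero_iff.2
      intro l hl
      exact sub_ne_zero.2 fun h => (Finset.mem_erase.1 hl).1 (hξ h).symm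
    simp only [mul_zero, zero_add, add_zero, mul_eq_zero] at hev
    tauto
  -- conclude
  rcases Fin.eq_zero_or_eq_succ k with rfl | ⟨i, rfl⟩
  · exact hc0
  · exact hcs i

/-- For distinct nodes `z_j`, distinct poles `ξ_k` disjoint from the nodes, and
`n + 1 ≤ m`, the matrix with a first column of ones and remaining entries
`1/(z_j - ξ_k)` has full column rank `n + 1`. -/
theorem cauchy_full_column_rank (m n : ℕ) (z : Fin m → ℂ) (ξ : Fin n → ℂ)
    (hz : Function.Injective z) (hξ : Function.Injective ξ)
    (hzξ : ∀ j k, z j ≠ ξ k) (hnm : n + 1 ≤ m) :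
    (Matrix.of fun (j : Fin m) (k : Fin (n + 1)) =>
      (Fin.cases (1 : ℂ) (fun i => (z j - ξ i)⁻¹) k : ℂ)).rank = n + 1 := by
  rw [← Matrix.rank_transpose]
  have h := (cauchy_cols_li m n z ξ hz hξ hzξ hnm).rank_matrix
  rw [Fintype.card_fin] at h
  exact h
end
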